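/- arXiv:2008.04472 — 6 statements merged into one kernel-verified Lean document; each statement's English description precedes it below -/
import Mathlib

section
/- The torsion subgroup of the quotient Ȳ/IY equals the image of the norm-kernel of Ȳ; that is, an element ȳ + IY ∈ Ȳ/IY is torsion if and only if there exists ȳ' ∈ Ȳ with N·ȳ' = 0 and ȳ − ȳ' ∈ IY. -/
/-!
The norm `N = ∑ g` is `G`-invariant, so it kills every `g • y - y` and hence `IY`; in the
torsion-free module `Ybar`, if `n • ybar ∈ IY` then `n • N ybar = 0`, so `N ybar = 0`.
Conversely, `N y - |G| • y = ∑ g, (g • y - y)` lies in `IY` for `y ∈ Y`. If `N ybar' = 0`, then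
`y = [Ybar : Y] • ybar'` lies in `Y`, so `(|G| * [Ybar : Y]) • ybar' ∈ IY`, and `ybar` differs
from `ybar'` by an element of `IY`.
-/

section NormMap

variable (G : Type*) {M : Type*} [Group G] [Fintype G] [AddCommGroup M] [DistribMulAction G M]

def normMap : M →+ M := ∑ g : G, DistribSMul.toAddMonoidHom M g

variable {G}

lemma normMap_apply (x : M) : normMap G x = ∑ g : G, g • x := by
  simp [normMap, AddMonoidHom.finsetSum_apply]

lemma normMap_smul (g : G) (x : M) : normMap G (g • x) = normMap G x := by
  simp only [normMap_apply, smul_smul]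
  exact Fintype.sum_equiv (Equiv.mulRight g) _ _ fun _ => rfl

variable (G) in
/-- `I s` for the augmentation ideal `I`; the statement's `IY` is `augmentationSpan G Y`. -/
abbrev augmentationSpan (s : Set M) : AddSubgroup M :=
  AddSubgroup.closure {x | ∃ g : G, ∃ y ∈ s, x = g • y - y}

lemma augmentationSpan_le_ker_normMap (s : Set M) : augmentationSpan G s ≤ (normMap G).ker := by
  rw [AddSubgroup.closure_le]
  rintro _ ⟨g, y, -, rfl⟩
  simp [normMap_smul]

lemma normMap_sub_card_nsmul_mem_augmentationSpan {s : Set M} {y : M} (hy : y ∈ s) :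
    normMap G y - Fintype.card G • y ∈ augmentationSpan G s := by
  have hsum : normMap G y - Fintype.card G • y = ∑ g : G, (g • y - y) := by
    rw [Finset.sum_sub_distrib, Finset.sum_const, Finset.card_univ, normMap_apply]
  rw [hsum]
  exact AddSubgroup.sum_mem _ fun g _ => AddSubgroup.subset_closure ⟨g, y, hy, rfl⟩

lemma normMap_eq_zero_of_nsmul_mem_augmentationSpan [IsAddTorsionFree M] {s : Set M} {x : M}
    {n : ℕ} (hn : n ≠ 0) (hx : n • x ∈ augmentationSpan G s) : normMap G x = 0 := by
  have hker := augmentationSpan_le_ker_normMap s hx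
  rw [AddMonoidHom.mem_ker, map_nsmul] at hker
  exact (nsmul_eq_zero_iff_right hn).mp hker

lemma nsmul_mem_augmentationSpan_of_normMap_eq_zero {Y : AddSubgroup M} {x : M}
    (hx : normMap G x = 0) :
    (Fintype.card G * Y.index) • x ∈ augmentationSpan G Y := by
  have hmem := normMap_sub_card_nsmul_mem_augmentationSpan (G := G) (Y.nsmul_index_mem x)
  rwa [map_nsmul, hx, smul_zero, zero_sub, smul_smul, neg_mem_iff] at hmem

end NormMap

theorem stmt0_general (G : Type*) [Group G] [Fintype G]
    (Ybar : Type*) [AddCommGroup Ybar] [Module.Free ℤ Ybar]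
    [DistribMulAction G Ybar]
    (Y : AddSubgroup Ybar)
    (hfin : Finite (Ybar ⧸ Y))
    (IY : AddSubgroup Ybar)
    (hIY : IY = AddSubgroup.closure {x | ∃ (g : G), ∃ y ∈ Y, x = g • y - y})
    (ybar : Ybar) :
    (∃ n : ℕ, 0 < n ∧ n • ybar ∈ IY) ↔
      ∃ ybar' : Ybar, (∑ g : G, g • ybar') = 0 ∧ ybar - ybar' ∈ IY := by
  have : IsAddTorsionFree Ybar := .of_isTorsionFree ℤ Ybar
  change IY = augmentationSpan G Y at hIY
  subst hIY
  simp only [← normMap_apply]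
  constructor
  · rintro ⟨n, hn, hmem⟩
    exact ⟨ybar, normMap_eq_zero_of_nsmul_mem_augmentationSpan hn.ne' hmem, by simp⟩
  · rintro ⟨ybar', hN, hdiff⟩
    set n := Fintype.card G * Y.index
    have hn : n ≠ 0 := mul_ne_zero Fintype.card_ne_zero Y.index_ne_zero_of_finite
    have hsum := AddSubgroup.add_mem _ (AddSubgroup.nsmul_mem _ hdiff n)
      (nsmul_mem_augmentationSpan_of_normMap_eq_zero (G := G) hN)
    rw [smul_sub, sub_add_cancel] at hsum
    exact ⟨n, Nat.pos_of_ne_zero hn, hsum⟩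

/-- For `G` a finite group, `Ybar` a finitely generated free ℤ-module with
(ℤ-linear) `G`-action, `Y ⊆ Ybar` a `G`-stable submodule of finite index, `IY` the subgroup
generated by elements `g • y - y` (`y ∈ Y`), and `N = ∑ g` the norm: an element
`ybar + IY` of `Ybar/IY` is torsion iff there exists `ybar'` with `N • ybar' = 0` and
`ybar - ybar' ∈ IY`. -/
theorem stmt0 (G : Type*) [Group G] [Fintype G]
    (Ybar : Type*) [AddCommGroup Ybar] [Module.Free ℤ Ybar] [Module.Finite ℤ Ybar]
    [DistribMulAction G Ybar]
    (Y : AddSubgroup Ybar) (hYstab : ∀ (g : G), ∀ y ∈ Y, g • y ∈ Y)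
    (hfin : Finite (Ybar ⧸ Y))
    (IY : AddSubgroup Ybar)
    (hIY : IY = AddSubgroup.closure {x | ∃ (g : G), ∃ y ∈ Y, x = g • y - y})
    (ybar : Ybar) :
    (∃ n : ℕ, 0 < n ∧ n • ybar ∈ IY) ↔
      ∃ ybar' : Ybar, (∑ g : G, g • ybar') = 0 ∧ ybar - ybar' ∈ IY :=
  stmt0_general G Ybar Y hfin IY hIY ybar
end

section
/- The map sending f to the composite of f with evaluation at the identity coordinate gives a group isomorphism from Hom_{ℤ[G]}(M, A) onto the set of φ ∈ Hom_ℤ(M, ℤ/nℤ) satisfying Σ_{g∈G} φ(g⁻¹·m) = 0 for all m ∈ M. -/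
/-!
A `G`-equivariant map `f : M → (G → R)` (with `G` acting on `G → R` by left translation) is
determined by its identity coordinate, since `f m h = f (h⁻¹ • m) 1`. Conversely every additive
`φ : M → R` is the identity coordinate of the equivariant map `m ↦ (h ↦ φ (h⁻¹ • m))`. Under this
correspondence `∑ h, f m h = ∑ g, φ (g⁻¹ • m)`, so the augmentation condition on `f` becomes the
stated condition on `φ`.
-/

open Finset

section CoinducedHom

variable {G : Type*} [Group G] {M : Type*} [AddCommGroup M] [DistribMulAction G M]
  {R : Type*} [AddCommMonoid R]

theorem apply_eq_apply_inv_smul_one {f : M →+ (G → R)}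
    (hf : ∀ (g : G) (m : M) (h : G), f (g • m) h = f m (g⁻¹ * h)) (m : M) (h : G) :
    f m h = f (h⁻¹ • m) 1 := by
  rw [hf h⁻¹ m 1, inv_inv, mul_one]

theorem sum_apply_eq_sum_apply_inv_smul_one [Fintype G] {f : M →+ (G → R)}
    (hf : ∀ (g : G) (m : M) (h : G), f (g • m) h = f m (g⁻¹ * h)) (m : M) :
    ∑ h : G, f m h = ∑ g : G, f (g⁻¹ • m) 1 :=
  sum_congr rfl fun h _ => apply_eq_apply_inv_smul_one hf m h

theorem evalAddMonoidHom_one_comp_injOn :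
    Set.InjOn (fun f : M →+ (G → R) => (Pi.evalAddMonoidHom (fun _ : G => R) 1).comp f)
      {f | ∀ (g : G) (m : M) (h : G), f (g • m) h = f m (g⁻¹ * h)} := by
  intro f₁ hf₁ f₂ hf₂ heq
  ext m h
  rw [apply_eq_apply_inv_smul_one hf₁, apply_eq_apply_inv_smul_one hf₂]
  exact DFunLike.congr_fun heq (h⁻¹ • m)

variable (G) in
def coinducedHom (φ : M →+ R) : M →+ (G → R) :=
  AddMonoidHom.pi fun h => φ.comp (DistribSMul.toAddMonoidHom M h⁻¹)

@[simp]
theorem coinducedHom_apply (φ : M →+ R) (m : M) (h : G) :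
    coinducedHom G φ m h = φ (h⁻¹ • m) :=
  rfl

theorem coinducedHom_smul_apply (φ : M →+ R) (g : G) (m : M) (h : G) :
    coinducedHom G φ (g • m) h = coinducedHom G φ m (g⁻¹ * h) := by
  simp [mul_smul]

theorem evalAddMonoidHom_one_comp_coinducedHom (φ : M →+ R) :
    (Pi.evalAddMonoidHom (fun _ : G => R) 1).comp (coinducedHom G φ) = φ := by
  ext m
  simp

end CoinducedHom

theorem stmt1_general (G : Type*) [Group G] [Fintype G] (n : ℕ)
    (M : Type*) [AddCommGroup M] [DistribMulAction G M] :
    (Set.InjOn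
      (fun f : M →+ (G → ZMod n) =>
        (Pi.evalAddMonoidHom (fun _ : G => ZMod n) (1 : G)).comp f)
      {f | (∀ (g : G) (m : M) (h : G), f (g • m) h = f m (g⁻¹ * h)) ∧
            ∀ m : M, ∑ h : G, f m h = 0}) ∧
    (∀ f₁ f₂ : M →+ (G → ZMod n),
      (Pi.evalAddMonoidHom (fun _ : G => ZMod n) (1 : G)).comp (f₁ + f₂) =
        (Pi.evalAddMonoidHom (fun _ : G => ZMod n) (1 : G)).comp f₁ +
          (Pi.evalAddMonoidHom (fun _ : G => ZMod n) (1 : G)).comp f₂) ∧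
    ((fun f : M →+ (G → ZMod n) =>
        (Pi.evalAddMonoidHom (fun _ : G => ZMod n) (1 : G)).comp f) ''
      {f | (∀ (g : G) (m : M) (h : G), f (g • m) h = f m (g⁻¹ * h)) ∧
            ∀ m : M, ∑ h : G, f m h = 0}
      = {φ : M →+ ZMod n | ∀ m : M, ∑ g : G, φ (g⁻¹ • m) = 0}) := by
  refine ⟨evalAddMonoidHom_one_comp_injOn.mono fun f hf => hf.1,
    fun f₁ f₂ => AddMonoidHom.comp_add _ _ _, ?_⟩
  ext φ
  constructor
  · rintro ⟨f, ⟨hf_equiv, hf_sum⟩, rfl⟩ m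
    simpa [sum_apply_eq_sum_apply_inv_smul_one hf_equiv] using hf_sum m
  · intro hφ
    exact ⟨coinducedHom G φ, ⟨coinducedHom_smul_apply φ, hφ⟩,
      evalAddMonoidHom_one_comp_coinducedHom φ⟩

/-- For `G` finite, `n ≥ 1`, `M` a ℤ[G]-module, and `A` the augmentation kernel of
`(ℤ/nℤ)[G]` (modelled as functions `G → ZMod n` with `G` acting by left translation,
`(g • f) h = f (g⁻¹ h)`):  the map `f ↦ (m ↦ f m 1)` is an isomorphism of groups (injective,
additive, with exactly the expected range) from `Hom_{ℤ[G]}(M, A)` onto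
`{φ : M →+ ℤ/nℤ | ∀ m, ∑ g, φ (g⁻¹ • m) = 0}`. -/
theorem stmt1 (G : Type*) [Group G] [Fintype G] (n : ℕ) (hn : 1 ≤ n)
    (M : Type*) [AddCommGroup M] [DistribMulAction G M] :
    (Set.InjOn
      (fun f : M →+ (G → ZMod n) =>
        (Pi.evalAddMonoidHom (fun _ : G => ZMod n) (1 : G)).comp f)
      {f | (∀ (g : G) (m : M) (h : G), f (g • m) h = f m (g⁻¹ * h)) ∧
            ∀ m : M, ∑ h : G, f m h = 0}) ∧
    (∀ f₁ f₂ : M →+ (G → ZMod n),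
      (Pi.evalAddMonoidHom (fun _ : G => ZMod n) (1 : G)).comp (f₁ + f₂) =
        (Pi.evalAddMonoidHom (fun _ : G => ZMod n) (1 : G)).comp f₁ +
          (Pi.evalAddMonoidHom (fun _ : G => ZMod n) (1 : G)).comp f₂) ∧
    ((fun f : M →+ (G → ZMod n) =>
        (Pi.evalAddMonoidHom (fun _ : G => ZMod n) (1 : G)).comp f) ''
      {f | (∀ (g : G) (m : M) (h : G), f (g • m) h = f m (g⁻¹ * h)) ∧
            ∀ m : M, ∑ h : G, f m h = 0}
      = {φ : M →+ ZMod n | ∀ m : M, ∑ g : G, φ (g⁻¹ • m) = 0}) :=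
  stmt1_general G n M
end

section
/- The G-fixed points of A (for the left translation action) form a cyclic group of order gcd(n, m), generated by the element (n/gcd(n,m))·N, where N = Σ_{g∈G}[g]. -/
/-!
Invariance under left translation forces `f (g⁻¹ * g) = f g`, i.e. `f` is constant, so the fixed
points of the augmentation kernel are the constants `c` with `m • c = 0`. In `ℤ/nℤ` this is the
condition `n / gcd(n, m) ∣ c`, and `n / gcd(n, m)` has additive order `gcd(n, m)`.
-/

theorem Nat.dvd_mul_iff_div_gcd_dvd {n m k : ℕ} (hnm : 0 < n.gcd m) :
    n ∣ m * k ↔ n / n.gcd m ∣ k := by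
  calc n ∣ m * k ↔ n.gcd m * (n / n.gcd m) ∣ n.gcd m * (m / n.gcd m * k) := by
        rw [Nat.mul_div_cancel' (Nat.gcd_dvd_left n m), ← mul_assoc,
          Nat.mul_div_cancel' (Nat.gcd_dvd_right n m)]
    _ ↔ n / n.gcd m ∣ m / n.gcd m * k := Nat.mul_dvd_mul_iff_left hnm
    _ ↔ n / n.gcd m ∣ k := (Nat.coprime_div_gcd_div_gcd hnm).dvd_mul_left

namespace ZMod

variable {n : ℕ} [NeZero n]

theorem mem_zmultiples_natCast_iff {d : ℕ} (hd : d ∣ n) {c : ZMod n} :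
    c ∈ AddSubgroup.zmultiples (d : ZMod n) ↔ d ∣ c.val := by
  constructor
  · rintro ⟨k, rfl⟩
    rw [← natCast_eq_zero_iff, natCast_val, ← castHom_apply (h := hd), map_zsmul, map_natCast,
      natCast_self, smul_zero]
  · rintro ⟨k, hk⟩
    refine ⟨k, ?_⟩
    change (k : ℤ) • (d : ZMod n) = c
    rw [← natCast_zmod_val c, hk, natCast_zsmul, nsmul_eq_mul, Nat.cast_mul, mul_comm]

theorem nsmul_eq_zero_iff_mem_zmultiples (m : ℕ) (c : ZMod n) :
    m • c = 0 ↔ c ∈ AddSubgroup.zmultiples ((n / n.gcd m : ℕ) : ZMod n) := by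
  rw [mem_zmultiples_natCast_iff (Nat.div_dvd_of_dvd (Nat.gcd_dvd_left n m)),
    ← Nat.dvd_mul_iff_div_gcd_dvd (Nat.gcd_pos_of_pos_left m (NeZero.pos n)),
    ← natCast_eq_zero_iff, Nat.cast_mul, natCast_zmod_val, nsmul_eq_mul]

theorem addOrderOf_natCast_div_gcd (m : ℕ) :
    addOrderOf ((n / n.gcd m : ℕ) : ZMod n) = n.gcd m := by
  rw [addOrderOf_coe _ (NeZero.ne n),
    Nat.gcd_eq_right (Nat.div_dvd_of_dvd (Nat.gcd_dvd_left n m)),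
    Nat.div_div_self (Nat.gcd_dvd_left n m) (NeZero.ne n)]

end ZMod

section LeftTranslation

variable {G M : Type*} [Group G]

theorem forall_apply_inv_mul_eq_iff_eq_const (f : G → M) :
    (∀ g h, f (g⁻¹ * h) = f h) ↔ f = Function.const G (f 1) := by
  constructor
  · intro hf
    funext g
    simpa using (hf g g).symm
  · intro hf g h
    rw [hf]
    rfl

theorem setOf_sum_eq_zero_and_leftInvariant_eq_image_const [Fintype G] [AddCommMonoid M] :
    {f : G → M | ∑ g, f g = 0 ∧ ∀ g h, f (g⁻¹ * h) = f h} =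
      Function.const G '' {c | Fintype.card G • c = 0} := by
  ext f
  simp only [Set.mem_ofPred_eq, Set.mem_image, forall_apply_inv_mul_eq_iff_eq_const]
  constructor
  · rintro ⟨hsum, hf⟩
    refine ⟨f 1, ?_, hf.symm⟩
    rw [hf] at hsum
    simpa using hsum
  · rintro ⟨c, hc, rfl⟩
    exact ⟨by simpa using hc, rfl⟩

end LeftTranslation

/-- For `G` finite of order `m` and `A` the augmentation kernel of `(ℤ/nℤ)[G]`
(functions `G → ZMod n` with coefficient sum zero), the `G`-fixed points of `A` for the left
translation action form a cyclic group of order `gcd(n, m)` generated by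
`(n / gcd(n,m)) · N`, where `N = ∑_{g∈G} [g]` is the constant function `1`. -/
theorem stmt2 (G : Type*) [Group G] [Fintype G] (n m : ℕ) (hn : 0 < n)
    (hm : m = Fintype.card G) :
    {f : G → ZMod n | (∑ g : G, f g) = 0 ∧ ∀ g h : G, f (g⁻¹ * h) = f h}
      = (↑(AddSubgroup.zmultiples
            (fun _ : G => ((n / Nat.gcd n m : ℕ) : ZMod n))) : Set (G → ZMod n)) ∧
    Nat.card {f : G → ZMod n | (∑ g : G, f g) = 0 ∧ ∀ g h : G, f (g⁻¹ * h) = f h}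
      = Nat.gcd n m := by
  have : NeZero n := ⟨hn.ne'⟩
  have hfixed : {f : G → ZMod n | (∑ g : G, f g) = 0 ∧ ∀ g h : G, f (g⁻¹ * h) = f h} =
      Function.const G '' AddSubgroup.zmultiples ((n / Nat.gcd n m : ℕ) : ZMod n) := by
    rw [setOf_sum_eq_zero_and_leftInvariant_eq_image_const, ← hm]
    exact congrArg _ (Set.ext (ZMod.nsmul_eq_zero_iff_mem_zmultiples m))
  constructor
  · rw [hfixed]
    exact congrArg SetLike.coe (AddMonoidHom.map_zmultiples (Pi.constAddMonoidHom G (ZMod n)) _)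
  · rw [hfixed, Nat.card_image_of_injective Function.const_injective, SetLike.coe_sort_coe,
      Nat.card_zmultiples, ZMod.addOrderOf_natCast_div_gcd]
end

section
/- The following sequence is exact at its second and third terms: ker(N|_Y)/IY → ker(N|_Ȳ)/IY → ker(N̄) → Y^G/N(Y), where the first map is induced by the inclusion Y ⊆ Ȳ, the second is induced by the projection Ȳ → Ȳ/Y, N̄ denotes the endomorphism of Ȳ/Y induced by N, and the third map sends the class of ȳ ∈ Ȳ (with N̄(ȳ + Y) = 0, so that N(ȳ) ∈ Y ∩ Ȳ^G = Y^G) to the class of N(ȳ) in Y^G/N(Y). -/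
/-!
Exactness at `ker(N|_Ȳ)/IY` holds because `IY ⊆ Y`, as `Y` is `G`-stable. Exactness at
`ker(N̄)` holds because `N` is additive: `N ȳ = N y` with `y ∈ Y` says precisely that
`ȳ' := ȳ - y` lies in `ker N` and `ȳ - ȳ' ∈ Y`.
-/

section NormMap

variable {G M : Type*} [Monoid G] [AddCommGroup M] [DistribMulAction G M]

lemma closure_smul_sub_le {Y : AddSubgroup M} (hY : ∀ g : G, ∀ y ∈ Y, g • y ∈ Y) :
    AddSubgroup.closure {x | ∃ g : G, ∃ y ∈ Y, x = g • y - y} ≤ Y := by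
  rw [AddSubgroup.closure_le]
  rintro x ⟨g, y, hy, rfl⟩
  exact sub_mem (hY g y hy) hy

variable [Fintype G]

lemma sum_smul_sub (x y : M) : ∑ g : G, g • (x - y) = ∑ g : G, g • x - ∑ g : G, g • y := by
  simp only [smul_sub, Finset.sum_sub_distrib]

lemma mem_iff_exists_sum_smul_eq_zero_sub_mem {Y I : AddSubgroup M} (hIY : I ≤ Y) {x : M}
    (hx : ∑ g : G, g • x = 0) : x ∈ Y ↔ ∃ y ∈ Y, ∑ g : G, g • y = 0 ∧ x - y ∈ I := by
  constructor
  · intro hxY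
    exact ⟨x, hxY, hx, by simp⟩
  · rintro ⟨y, hy, -, hxy⟩
    simpa using add_mem (hIY hxy) hy

lemma exists_sum_smul_eq_iff_exists_sum_smul_eq_zero (Y : AddSubgroup M) (x : M) :
    (∃ y ∈ Y, ∑ g : G, g • x = ∑ g : G, g • y) ↔
      ∃ x' : M, ∑ g : G, g • x' = 0 ∧ x - x' ∈ Y := by
  constructor
  · rintro ⟨y, hy, hxy⟩
    exact ⟨x - y, by rw [sum_smul_sub, hxy, sub_self], by simpa using hy⟩
  · rintro ⟨x', hx', hxx'⟩
    exact ⟨x - x', hxx', by rw [sum_smul_sub, hx', sub_zero]⟩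

end NormMap

theorem stmt7_general (G : Type*) [Group G] [Fintype G]
    (Ybar : Type*) [AddCommGroup Ybar]
    [DistribMulAction G Ybar]
    (Y : AddSubgroup Ybar) (hYstab : ∀ (g : G), ∀ y ∈ Y, g • y ∈ Y)
    (IY : AddSubgroup Ybar)
    (hIY : IY = AddSubgroup.closure {x | ∃ (g : G), ∃ y ∈ Y, x = g • y - y}) :
    (∀ ybar : Ybar, (∑ g : G, g • ybar) = 0 →
      (ybar ∈ Y ↔ ∃ y ∈ Y, (∑ g : G, g • y) = 0 ∧ ybar - y ∈ IY)) ∧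
    (∀ ybar : Ybar, (∑ g : G, g • ybar) ∈ Y →
      ((∃ y ∈ Y, (∑ g : G, g • ybar) = ∑ g : G, g • y) ↔
        ∃ ybar' : Ybar, (∑ g : G, g • ybar') = 0 ∧ ybar - ybar' ∈ Y)) := by
  have hIYle : IY ≤ Y := hIY ▸ closure_smul_sub_le hYstab
  exact ⟨fun _ hN => mem_iff_exists_sum_smul_eq_zero_sub_mem hIYle hN,
    fun ybar _ => exists_sum_smul_eq_iff_exists_sum_smul_eq_zero Y ybar⟩

/-- With `G` finite, `Ybar` f.g. free ℤ-module with `G`-action, `Y` a `G`-stable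
finite-index submodule, `N = ∑ g` and `IY` spanned by `g • y - y` (`y ∈ Y`), the sequence
`ker(N|_Y)/IY → ker(N|_Ybar)/IY → ker(N̄) → Y^G/N(Y)` is exact at its second and third
terms.  This is expressed elementwise: exactness at the second term says that for `ybar` with
`N ybar = 0`, the class of `ybar` dies in `Ȳ/Y` (i.e. `ybar ∈ Y`) iff it comes from
`ker(N|_Y)/IY`; exactness at the third term says that for `ybar` with `N ybar ∈ Y`, the class
`N ybar ∈ Y^G/N(Y)` vanishes iff `ybar + Y` comes from `ker(N|_Ybar)/IY`. -/
theorem stmt7 (G : Type*) [Group G] [Fintype G]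
    (Ybar : Type*) [AddCommGroup Ybar] [Module.Free ℤ Ybar] [Module.Finite ℤ Ybar]
    [DistribMulAction G Ybar]
    (Y : AddSubgroup Ybar) (hYstab : ∀ (g : G), ∀ y ∈ Y, g • y ∈ Y)
    (hfin : Finite (Ybar ⧸ Y))
    (IY : AddSubgroup Ybar)
    (hIY : IY = AddSubgroup.closure {x | ∃ (g : G), ∃ y ∈ Y, x = g • y - y}) :
    (∀ ybar : Ybar, (∑ g : G, g • ybar) = 0 →
      (ybar ∈ Y ↔ ∃ y ∈ Y, (∑ g : G, g • y) = 0 ∧ ybar - y ∈ IY)) ∧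
    (∀ ybar : Ybar, (∑ g : G, g • ybar) ∈ Y →
      ((∃ y ∈ Y, (∑ g : G, g • ybar) = ∑ g : G, g • y) ↔
        ∃ ybar' : Ybar, (∑ g : G, g • ybar') = 0 ∧ ybar - ybar' ∈ Y)) :=
  stmt7_general G Ybar Y hYstab IY hIY
end

section
/- The map Φ : Π_k A_k → Π_k A_k defined by Φ((a_k)_k) = (a_k − f_k(a_{k+1}))_k is surjective. (Equivalently, lim¹ of the system vanishes.) -/
/-!
The first `n` equations `a k - f k (a (k + 1)) = b k`, `k < n`, can always be solved by
back-substitution from `a n = 0`. Their solution sets form a decreasing sequence of nonempty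
closed subsets of the compact group `Π k, A k`, so they have a common point, which solves
all the equations at once.
-/

open Set

section Solutions

variable {A : ℕ → Type*} [∀ k, AddCommGroup (A k)] (f : ∀ k, A (k + 1) →+ A k) (b : ∀ k, A k)

def truncatedSolution (n k : ℕ) : A k :=
  if k < n then b k + f k (truncatedSolution n (k + 1)) else 0
termination_by n - k

theorem truncatedSolution_sub {n k : ℕ} (hk : k < n) :
    truncatedSolution f b n k - f k (truncatedSolution f b n (k + 1)) = b k := by
  rw [truncatedSolution, if_pos hk]
  abel

def solutionsUpTo (n : ℕ) : Set (∀ k, A k) :=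
  {a | ∀ k < n, a k - f k (a (k + 1)) = b k}

theorem solutionsUpTo_nonempty (n : ℕ) : (solutionsUpTo f b n).Nonempty :=
  ⟨truncatedSolution f b n, fun _ hk => truncatedSolution_sub f b hk⟩

theorem solutionsUpTo_succ_subset (n : ℕ) : solutionsUpTo f b (n + 1) ⊆ solutionsUpTo f b n :=
  fun _ ha k hk => ha k (Nat.lt_succ_of_lt hk)

theorem isClosed_solutionsUpTo [∀ k, TopologicalSpace (A k)] [∀ k, T2Space (A k)]
    [∀ k, IsTopologicalAddGroup (A k)] (hf : ∀ k, Continuous (f k)) (n : ℕ) :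
    IsClosed (solutionsUpTo f b n) := by
  have hset : solutionsUpTo f b n =
      ⋂ k, ⋂ _ : k < n, {a : ∀ k, A k | a k - f k (a (k + 1)) = b k} := by
    ext a
    simp [solutionsUpTo]
  rw [hset]
  refine isClosed_iInter fun k => isClosed_iInter fun _ => isClosed_eq ?_ continuous_const
  exact (continuous_apply k).sub ((hf k).comp (continuous_apply (k + 1)))

end Solutions

/-- For an inverse system `(A_k)` of compact Hausdorff topological abelian
groups with continuous transition maps `f_k : A_{k+1} → A_k`, the map
`Φ((a_k)_k) = (a_k − f_k(a_{k+1}))_k` on `Π_k A_k` is surjective (i.e. `lim¹` vanishes). -/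
theorem stmt13 (A : ℕ → Type*) [∀ k, AddCommGroup (A k)] [∀ k, TopologicalSpace (A k)]
    [∀ k, CompactSpace (A k)] [∀ k, T2Space (A k)] [∀ k, IsTopologicalAddGroup (A k)]
    (f : ∀ k, A (k + 1) →+ A k) (hf : ∀ k, Continuous (f k)) :
    Function.Surjective
      (fun a : ∀ k, A k => (fun k => a k - f k (a (k + 1)) : ∀ k, A k)) := by
  intro b
  obtain ⟨a, ha⟩ := IsCompact.nonempty_iInter_of_sequence_nonempty_isCompact_isClosed
    (solutionsUpTo f b) (solutionsUpTo_succ_subset f b) (solutionsUpTo_nonempty f b)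
    (isClosed_solutionsUpTo f b hf 0).isCompact (isClosed_solutionsUpTo f b hf)
  exact ⟨a, funext fun k => mem_iInter.mp ha (k + 1) k k.lt_succ_self⟩
end

section
/- Suppose ȳ ∈ Ȳ satisfies N·ȳ ∈ Y. Then for n equal to the exponent of the finite group Ȳ/Y, the element n·|G|·ȳ lies in IY + ℤ·(N·ȳ); in particular, if N·ȳ = 0 then the class of ȳ in Ȳ/IY is killed by n·|G|. -/
/-!
If `n` kills `Ȳ/Y`, then `n ȳ ∈ Y`, so `∑_g (g - 1)(n ȳ) ∈ IY`. Expanding this sum gives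
`n N ȳ - n |G| ȳ`, which expresses `n |G| ȳ` as an element of `IY` plus `n · N ȳ`.
-/

open Finset

section AugmentationSubgroup

variable {G A : Type*} [Monoid G] [AddCommGroup A] [DistribMulAction G A]

variable (G) in
/-- `I·Y`, for `I` the augmentation ideal of `ℤ[G]`. -/
def augmentationSubgroup (Y : AddSubgroup A) : AddSubgroup A :=
  AddSubgroup.closure {x | ∃ g : G, ∃ y ∈ Y, x = g • y - y}

lemma sum_smul_sub_mem_augmentationSubgroup [Fintype G] {Y : AddSubgroup A} {y : A}
    (hy : y ∈ Y) : ∑ g : G, (g • y - y) ∈ augmentationSubgroup G Y :=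
  AddSubgroup.sum_mem _ fun g _ => AddSubgroup.subset_closure ⟨g, y, hy, rfl⟩

lemma sum_smul_nsmul_sub_eq [Fintype G] (m : ℕ) (x : A) :
    ∑ g : G, (g • (m • x) - m • x) = (m : ℤ) • ∑ g : G, g • x - (m * Fintype.card G) • x := by
  rw [sum_sub_distrib, sum_const, card_univ, smul_smul, mul_comm, natCast_zsmul, smul_sum]
  exact congrArg (· - _) (sum_congr rfl fun g _ => smul_comm g m x)

end AugmentationSubgroup

lemma exponent_nsmul_mem {A : Type*} [AddCommGroup A] (Y : AddSubgroup A) (x : A) :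
    AddMonoid.exponent (A ⧸ Y) • x ∈ Y := by
  rw [← QuotientAddGroup.eq_zero_iff, QuotientAddGroup.mk_nsmul]
  exact AddMonoid.exponent_nsmul_eq_zero _

theorem stmt16_general (G : Type*) [Group G] [Fintype G]
    (Ybar : Type*) [AddCommGroup Ybar]
    [DistribMulAction G Ybar]
    (Y : AddSubgroup Ybar)
    (IY : AddSubgroup Ybar)
    (hIY : IY = AddSubgroup.closure {x | ∃ (g : G), ∃ y ∈ Y, x = g • y - y})
    (n : ℕ) (hn : n = AddMonoid.exponent (Ybar ⧸ Y))
    (ybar : Ybar) :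
    (∃ z ∈ IY, ∃ k : ℤ, (n * Fintype.card G) • ybar = z + k • (∑ g : G, g • ybar)) ∧
    ((∑ g : G, g • ybar) = 0 → (n * Fintype.card G) • ybar ∈ IY) := by
  change IY = augmentationSubgroup G Y at hIY
  have hmem : ∑ g : G, (g • (n • ybar) - n • ybar) ∈ IY :=
    hIY ▸ sum_smul_sub_mem_augmentationSubgroup (hn ▸ exponent_nsmul_mem Y ybar)
  have key : (n * Fintype.card G) • ybar
      = -∑ g : G, (g • (n • ybar) - n • ybar) + (n : ℤ) • ∑ g : G, g • ybar := by
    rw [sum_smul_nsmul_sub_eq]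
    abel
  refine ⟨⟨_, neg_mem hmem, n, key⟩, fun hN => ?_⟩
  rw [key, hN, smul_zero, add_zero]
  exact neg_mem hmem

/-- With `G` finite of order `|G|`, `Ybar` f.g. free ℤ-module with `G`-action,
`Y ⊆ Ybar` `G`-stable of finite index, `N = ∑ g`, `I` the augmentation ideal and `IY` spanned
by `g • y - y` (`y ∈ Y`): if `N • ybar ∈ Y` and `n` is the exponent of `Ybar/Y`, then
`n·|G|·ybar ∈ IY + ℤ·(N ybar)`; in particular if `N ybar = 0` then the class of `ybar` in
`Ybar/IY` is killed by `n·|G|`. -/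
theorem stmt16 (G : Type*) [Group G] [Fintype G]
    (Ybar : Type*) [AddCommGroup Ybar] [Module.Free ℤ Ybar] [Module.Finite ℤ Ybar]
    [DistribMulAction G Ybar]
    (Y : AddSubgroup Ybar) (hYstab : ∀ (g : G), ∀ y ∈ Y, g • y ∈ Y)
    (hfin : Finite (Ybar ⧸ Y))
    (IY : AddSubgroup Ybar)
    (hIY : IY = AddSubgroup.closure {x | ∃ (g : G), ∃ y ∈ Y, x = g • y - y})
    (n : ℕ) (hn : n = AddMonoid.exponent (Ybar ⧸ Y))
    (ybar : Ybar) (hNy : (∑ g : G, g • ybar) ∈ Y) :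
    (∃ z ∈ IY, ∃ k : ℤ, (n * Fintype.card G) • ybar = z + k • (∑ g : G, g • ybar)) ∧
    ((∑ g : G, g • ybar) = 0 → (n * Fintype.card G) • ybar ∈ IY) :=
  stmt16_general G Ybar Y IY hIY n hn ybar
end
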